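/- Let x ∈ ℝ^N be s-sparse, let b ∈ ℝ^N, and let b_s be the s-sparse vector consisting of the s largest-magnitude entries of b (the pruning step of CoSaMP). Then ‖x − b_s‖₂ ≤ 2‖x − b‖₂. -/
import Mathlib


open Finset

/-- The ℓ₂ norm on ℝ^N. -/
noncomputable def l2 {N : ℕ} (v : Fin N → ℝ) : ℝ := Real.sqrt (∑ i, v i ^ 2)

/-- The ℓ₁ norm on ℝ^N. -/
def l1 {N : ℕ} (v : Fin N → ℝ) : ℝ := ∑ i, |v i|

/-- A vector is `s`-sparse if it has at most `s` nonzero coordinates. -/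
def Sparse {N : ℕ} (s : ℕ) (v : Fin N → ℝ) : Prop :=
  (Finset.univ.filter fun j => v j ≠ 0).card ≤ s

/-- Restricted isometry condition with parameters (n, δ). -/
def RIC {m N : ℕ} (Φ : Matrix (Fin m) (Fin N) ℝ) (n : ℕ) (δ : ℝ) : Prop :=
  ∀ v : Fin N → ℝ, Sparse n v →
    (1 - δ) * l2 v ≤ l2 (Φ.mulVec v) ∧ l2 (Φ.mulVec v) ≤ (1 + δ) * l2 v

/-- Squared-form restricted isometry condition with parameters (n, δ). -/
def RICsq {m N : ℕ} (Φ : Matrix (Fin m) (Fin N) ℝ) (n : ℕ) (δ : ℝ) : Prop :=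
  ∀ v : Fin N → ℝ, Sparse n v →
    (1 - δ) * (l2 v) ^ 2 ≤ (l2 (Φ.mulVec v)) ^ 2 ∧
    (l2 (Φ.mulVec v)) ^ 2 ≤ (1 + δ) * (l2 v) ^ 2

/-- `xs` is the vector keeping the `s` largest-magnitude coordinates of `x`
(other coordinates set to 0). -/
def IsLargest {N : ℕ} (s : ℕ) (x xs : Fin N → ℝ) : Prop :=
  ∃ T : Finset (Fin N), T.card = min s N ∧
    (∀ i, xs i = if i ∈ T then x i else 0) ∧
    ∀ i ∈ T, ∀ j ∉ T, |x j| ≤ |x i|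

lemma l2_eq_norm {N : ℕ} (v : Fin N → ℝ) :
    l2 v = ‖((WithLp.equiv 2 (Fin N → ℝ)).symm v : EuclideanSpace ℝ (Fin N))‖ := by
  simp [l2, EuclideanSpace.norm_eq, Real.norm_eq_abs, sq_abs]

lemma l2_triangle {N : ℕ} (u v : Fin N → ℝ) : l2 (u + v) ≤ l2 u + l2 v := by
  simp only [l2_eq_norm]
  exact norm_add_le _ _

lemma l2_nonneg {N : ℕ} (v : Fin N → ℝ) : 0 ≤ l2 v := Real.sqrt_nonneg _

theorem pruning_lemma {N s : ℕ} (x b bs : Fin N → ℝ)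
    (hx : Sparse s x) (hbs : IsLargest s b bs) :
    l2 (x - bs) ≤ 2 * l2 (x - b) := by
  obtain ⟨T, hTcard, hbsT, hT⟩ := hbs
  set S : Finset (Fin N) := Finset.univ.filter fun j => x j ≠ 0 with hS
  -- key: l2 (b - bs) ≤ l2 (x - b)
  have key : l2 (b - bs) ≤ l2 (x - b) := by
    unfold l2
    apply Real.sqrt_le_sqrt
    have h1 : ∑ i, (b - bs) i ^ 2 = ∑ i ∈ Tᶜ, b i ^ 2 := by
      rw [← Finset.sum_add_sum_compl T]
      have : ∑ i ∈ T, (b - bs) i ^ 2 = 0 := by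
        apply Finset.sum_eq_zero
        intro i hi
        simp [hbsT i, hi]
      rw [this, zero_add]
      apply Finset.sum_congr rfl
      intro i hi
      simp only [Finset.mem_compl] at hi
      simp [hbsT i, hi]
    have h2 : ∑ i ∈ Sᶜ, b i ^ 2 ≤ ∑ i, (x - b) i ^ 2 := by
      rw [← Finset.sum_add_sum_compl S (fun i => (x - b) i ^ 2)]
      have h3 : ∑ i ∈ Sᶜ, b i ^ 2 = ∑ i ∈ Sᶜ, (x - b) i ^ 2 := by
        apply Finset.sum_congr rfl
        intro i hi
        simp only [Finset.mem_compl, hS, Finset.mem_filter, Finset.mem_univ,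
          true_and, not_not] at hi
        simp [hi]
      rw [h3]
      have : 0 ≤ ∑ i ∈ S, (x - b) i ^ 2 :=
        Finset.sum_nonneg fun i _ => sq_nonneg _
      linarith
    rw [h1]
    refine le_trans ?_ h2
    -- ∑ Tᶜ ≤ ∑ Sᶜ ↔ ∑ S ≤ ∑ T
    have hsum : ∑ i ∈ S, b i ^ 2 ≤ ∑ i ∈ T, b i ^ 2 := by
      rw [← Finset.sum_inter_add_sum_sdiff S T (fun i => b i ^ 2),
          ← Finset.sum_inter_add_sum_sdiff T S (fun i => b i ^ 2),
          Finset.inter_comm T S]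
      have hcard : (S \ T).card ≤ (T \ S).card := by
        have h1 : (S \ T).card + (S ∩ T).card = S.card :=
          Finset.card_sdiff_add_card_inter S T
        have h2 : (T \ S).card + (T ∩ S).card = T.card :=
          Finset.card_sdiff_add_card_inter T S
        have h3 : (S ∩ T).card = (T ∩ S).card := by rw [Finset.inter_comm]
        have h4 : S.card ≤ T.card := by
          rw [hTcard]
          exact le_min hx (le_trans (Finset.card_le_card (Finset.subset_univ S))
            (by simp))
        omega
      by_cases hST : (S \ T) = ∅
      · rw [hST]
        simp
        exact Finset.sum_nonneg fun i _ => sq_nonneg _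
      · have hTS : (T \ S).Nonempty := by
          rw [← Finset.card_pos]
          have := Finset.card_pos.mpr (Finset.nonempty_of_ne_empty hST)
          omega
        obtain ⟨i0, hi0, hmin⟩ := Finset.exists_min_image (T \ S) (fun i => b i ^ 2) hTS
        have hbound : ∑ i ∈ S \ T, b i ^ 2 ≤ (S \ T).card • (b i0 ^ 2) := by
          apply Finset.sum_le_card_nsmul
          intro j hj
          have hjT : j ∉ T := (Finset.mem_sdiff.mp hj).2
          have hi0T : i0 ∈ T := (Finset.mem_sdiff.mp hi0).1
          have := hT i0 hi0T j hjT
          calc b j ^ 2 = |b j| ^ 2 := (sq_abs _).symm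
            _ ≤ |b i0| ^ 2 := by
                apply pow_le_pow_left₀ (abs_nonneg _) this
            _ = b i0 ^ 2 := sq_abs _
        have hbound2 : (T \ S).card • (b i0 ^ 2) ≤ ∑ i ∈ T \ S, b i ^ 2 :=
          Finset.card_nsmul_le_sum _ _ _ hmin
        have hmono : (S \ T).card • (b i0 ^ 2) ≤ (T \ S).card • (b i0 ^ 2) := by
          apply nsmul_le_nsmul_left (sq_nonneg _) hcard
        linarith
    have htot : ∑ i ∈ T, b i ^ 2 + ∑ i ∈ Tᶜ, b i ^ 2
        = ∑ i ∈ S, b i ^ 2 + ∑ i ∈ Sᶜ, b i ^ 2 := by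
      rw [Finset.sum_add_sum_compl, Finset.sum_add_sum_compl]
    linarith
  have tri : l2 (x - bs) ≤ l2 (x - b) + l2 (b - bs) := by
    have : x - bs = (x - b) + (b - bs) := by ring
    rw [this]
    exact l2_triangle _ _
  linarith
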